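/- Let n ≥ 2 and let Q ∈ F_n with coefficients a_0 = 1, a_1, ..., a_n. If a_j = 0 for some j ∈ {1, ..., n−1}, then a_{j−1} a_{j+1} < 0. -/

import Mathlib

/-!
The quantity `c₁² - 2 c₀ c₂` of the low coefficients `cᵢ` of a polynomial transforms under
multiplication by `X - t` into `c₀² + t² (c₁² - 2 c₀ c₂)`, so it is nonnegative for every
polynomial with all its roots in an ordered field, and positive as soon as there is a root and
`c₀ ≠ 0`. By Rolle's theorem every derivative of a real-rooted real polynomial is again
real-rooted, and the `k`-th derivative has low coefficients proportional to `c_k, c_{k+1}, c_{k+2}`.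
Hence `c_{k+1} = 0` and `c_k ≠ 0` force `c_k c_{k+2} < 0`. Starting from `c₀ ≠ 0` (no root is
zero) this also shows, inductively, that no two consecutive coefficients vanish.
-/

open Polynomial

namespace Polynomial

theorem X_sub_C_mul_coeff_one_sq_sub {R : Type*} [CommRing R] (t : R) (p : R[X]) :
    ((X - C t) * p).coeff 1 ^ 2 - 2 * ((X - C t) * p).coeff 0 * ((X - C t) * p).coeff 2
      = p.coeff 0 ^ 2 + t ^ 2 * (p.coeff 1 ^ 2 - 2 * p.coeff 0 * p.coeff 2) := by
  rw [coeff_X_sub_C_mul, coeff_X_sub_C_mul, mul_coeff_zero]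
  simp only [coeff_sub, coeff_X_zero, coeff_C_zero]
  ring

section OrderedField

variable {K : Type*} [Field K] [LinearOrder K] [IsStrictOrderedRing K]

theorem prod_X_sub_C_two_mul_coeff_zero_mul_coeff_two_le (s : Multiset K) :
    2 * (s.map (X - C ·)).prod.coeff 0 * (s.map (X - C ·)).prod.coeff 2
      ≤ (s.map (X - C ·)).prod.coeff 1 ^ 2 := by
  induction s using Multiset.induction with
  | empty => simp [coeff_one]
  | cons t s ih =>
    rw [← sub_nonneg, Multiset.map_cons, Multiset.prod_cons, X_sub_C_mul_coeff_one_sq_sub]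
    have := sub_nonneg.2 ih
    positivity

theorem prod_X_sub_C_two_mul_coeff_zero_mul_coeff_two_lt {s : Multiset K} (hs : s ≠ 0)
    (h0 : (s.map (X - C ·)).prod.coeff 0 ≠ 0) :
    2 * (s.map (X - C ·)).prod.coeff 0 * (s.map (X - C ·)).prod.coeff 2
      < (s.map (X - C ·)).prod.coeff 1 ^ 2 := by
  obtain ⟨t, ht⟩ := Multiset.exists_mem_of_ne_zero hs
  obtain ⟨s, rfl⟩ := Multiset.exists_cons_of_mem ht
  rw [← sub_pos, Multiset.map_cons, Multiset.prod_cons, X_sub_C_mul_coeff_one_sq_sub]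
  rw [Multiset.map_cons, Multiset.prod_cons, mul_coeff_zero] at h0
  have htail := sub_nonneg.2 (prod_X_sub_C_two_mul_coeff_zero_mul_coeff_two_le s)
  have := right_ne_zero_of_mul h0
  positivity

theorem Splits.two_mul_coeff_zero_mul_coeff_two_lt {f : K[X]} (hf : f.Splits)
    (hdeg : f.natDegree ≠ 0) (h0 : f.coeff 0 ≠ 0) :
    2 * f.coeff 0 * f.coeff 2 < f.coeff 1 ^ 2 := by
  rw [hf.eq_prod_roots] at h0 ⊢
  simp only [coeff_C_mul] at h0 ⊢
  have hlt := prod_X_sub_C_two_mul_coeff_zero_mul_coeff_two_lt (hf.roots_ne_zero hdeg)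
    (right_ne_zero_of_mul h0)
  have hc : 0 < f.leadingCoeff ^ 2 := sq_pos_of_ne_zero (left_ne_zero_of_mul h0)
  linarith [mul_lt_mul_of_pos_left hlt hc]

end OrderedField

theorem Splits.derivative {f : ℝ[X]} (hf : f.Splits) : f.derivative.Splits := by
  rw [splits_iff_card_roots] at hf ⊢
  have := card_roots_le_derivative f
  have := card_roots' f.derivative
  have := natDegree_derivative_le f
  omega

theorem Splits.iterate_derivative {f : ℝ[X]} (hf : f.Splits) (k : ℕ) :
    (Polynomial.derivative^[k] f).Splits := by
  induction k with
  | zero => exact hf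
  | succ k ih => rw [Function.iterate_succ_apply']; exact ih.derivative

theorem Splits.coeff_mul_coeff_add_two_neg {f : ℝ[X]} (hf : f.Splits) {k : ℕ}
    (hk : k < f.natDegree) (h0 : f.coeff k ≠ 0) (h1 : f.coeff (k + 1) = 0) :
    f.coeff k * f.coeff (k + 2) < 0 := by
  set g := Polynomial.derivative^[k] f
  have hg (m : ℕ) : g.coeff m = (m + k).descFactorial k * f.coeff (m + k) := by
    rw [coeff_iterate_derivative, nsmul_eq_mul]
  have hpos {m : ℕ} (hm : k ≤ m) : (0 : ℝ) < m.descFactorial k := by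
    exact_mod_cast Nat.pos_of_ne_zero (Nat.descFactorial_eq_zero_iff_lt.not.2 (by omega))
  have hgdeg : g.natDegree ≠ 0 := by
    have : g.coeff (f.natDegree - k) ≠ 0 := by
      rw [hg, Nat.sub_add_cancel hk.le]
      exact mul_ne_zero (hpos hk.le).ne' (leadingCoeff_ne_zero.2 fun hf0 => h0 (by simp [hf0]))
    have := le_natDegree_of_ne_zero this
    omega
  have := (hf.iterate_derivative k).two_mul_coeff_zero_mul_coeff_two_lt hgdeg
    (by rw [hg, zero_add]; exact mul_ne_zero (hpos le_rfl).ne' h0)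
  rw [hg, hg, hg, zero_add, add_comm 1, add_comm 2, h1, mul_zero] at this
  have hscale : 0 < 2 * (k.descFactorial k : ℝ) * (k + 2).descFactorial k :=
    mul_pos (mul_pos two_pos (hpos le_rfl)) (hpos (by omega))
  exact neg_of_mul_neg_right (by linarith) hscale.le

theorem Splits.coeff_ne_zero_of_coeff_succ_eq_zero {f : ℝ[X]} (hf : f.Splits)
    (h0 : f.coeff 0 ≠ 0) {k : ℕ} (hk : k < f.natDegree) (h1 : f.coeff (k + 1) = 0) :
    f.coeff k ≠ 0 := by
  induction k with
  | zero => exact h0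
  | succ k ih =>
    intro hk1
    have := hf.coeff_mul_coeff_add_two_neg (by omega) (ih (by omega) hk1) hk1
    rw [h1, mul_zero] at this
    exact lt_irrefl 0 this

end Polynomial

theorem stmt_4_general (n : ℕ)
    (x : Fin n → ℤ) (hx : ∀ i, x i ≠ 0)
    (Q : Polynomial ℤ) (hQ : Q = ∏ i, (X - C (x i)))
    (j : ℕ) (hj1 : 1 ≤ j) (hj2 : j ≤ n - 1) (hzero : Q.coeff (n - j) = 0) :
    Q.coeff (n - (j - 1)) * Q.coeff (n - (j + 1)) < 0 := by
  set f : ℝ[X] := Q.map (Int.castRingHom ℝ)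
  have hf : f = ∏ i, (X - C (x i : ℝ)) := by simp [f, hQ, Polynomial.map_prod]
  have hsplits : f.Splits := hf ▸ Splits.prod fun i _ => Splits.X_sub_C _
  have hdeg : f.natDegree = n := by rw [hf, natDegree_finsetProd_X_sub_C_eq_card]; simp
  have hcoeff (m : ℕ) : f.coeff m = Q.coeff m := by simp [f]
  have hf0 : f.coeff 0 ≠ 0 := by
    simp [hf, coeff_zero_eq_eval_zero, eval_prod, Finset.prod_eq_zero_iff, hx]
  obtain ⟨k, hkj⟩ : ∃ k, k + 1 = n - j := ⟨n - j - 1, by omega⟩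
  rw [show n - (j - 1) = k + 2 by omega, show n - (j + 1) = k by omega]
  have h1 : f.coeff (k + 1) = 0 := by rw [hcoeff, hkj, hzero, Int.cast_zero]
  have hk : k < f.natDegree := by omega
  have := hsplits.coeff_mul_coeff_add_two_neg hk
    (hsplits.coeff_ne_zero_of_coeff_succ_eq_zero hf0 hk h1) h1
  rw [hcoeff, hcoeff, mul_comm] at this
  exact_mod_cast this

theorem stmt_4 (n : ℕ) (hn : 2 ≤ n)
    (x : Fin n → ℤ) (hx : ∀ i, x i ≠ 0)
    (Q : Polynomial ℤ) (hQ : Q = ∏ i, (X - C (x i)))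
    (j : ℕ) (hj1 : 1 ≤ j) (hj2 : j ≤ n - 1) (hzero : Q.coeff (n - j) = 0) :
    Q.coeff (n - (j - 1)) * Q.coeff (n - (j + 1)) < 0 :=
  stmt_4_general n x hx Q hQ j hj1 hj2 hzero
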